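/- Let ψ be a 2-form on a Euclidean vector space of even dimension n = 2m (m ≥ 2), and let {v₁,w₁,…,v_m,w_m} be an orthonormal basis diagonalizing ψ: ψ(v_α,w_β) = λ_α δ_{αβ}, ψ(v_α,v_β) = ψ(w_α,w_β) = 0. Let R be an algebraic curvature tensor with nonnegative isotropic curvature, and suppose Σλ_α² > 0. Then Σ_{i,j,k,l} (Ric^{ij} g^{kl} - R^{ijkl}) ψ_{ik} ψ_{jl} ≥ Σ_{α≠β} (|λ_α| - |λ_β|)² |R(v_α,w_α,v_β,w_β)| ≥ 0, and the inequality is strict if R has positive isotropic curvature. -/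

import Mathlib

/-!
In the basis diagonalizing ψ, the Bianchi identity turns the curvature term into
`∑_{α,β} (λ_α² S_{αβ} - 2 λ_α λ_β K_{αβ})`, where `K_{αβ} = R(v_α,w_α,v_β,w_β)` and `S_{αβ}` is the
sum of the four sectional terms between the planes `⟨v_α,w_α⟩` and `⟨v_β,w_β⟩`. Since `S` is
symmetric, `λ_α²` may be replaced by `(λ_α² + λ_β²)/2`, after which the diagonal terms vanish.
Isotropic curvature of the frames `(v_α, w_α, v_β, ±w_β)` gives `S_{αβ} ≥ 2|K_{αβ}|`, and then
`(λ_α² + λ_β²)/2 · S_{αβ} - 2 λ_α λ_β K_{αβ} ≥ (|λ_α| - |λ_β|)² |K_{αβ}|`.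
-/

open Finset Matrix

section RealInequalities

lemma sq_abs_sub_abs_mul_abs_le {a c S k : ℝ} (h : 2 * |k| ≤ S) :
    (|a| - |c|) ^ 2 * |k| ≤ (a ^ 2 + c ^ 2) / 2 * S - 2 * (a * c) * k := by
  have hack : a * c * k ≤ |a| * |c| * |k| := by
    simpa only [abs_mul] using le_abs_self (a * c * k)
  have hS : (a ^ 2 + c ^ 2) * |k| ≤ (a ^ 2 + c ^ 2) / 2 * S := by
    nlinarith [sq_nonneg a, sq_nonneg c]
  have hexp : (|a| - |c|) ^ 2 * |k| = (a ^ 2 + c ^ 2) * |k| - 2 * (|a| * |c| * |k|) := by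
    rw [← sq_abs a, ← sq_abs c]; ring
  linarith

lemma sub_pos_of_two_mul_abs_lt {a c S k : ℝ} (h : 2 * |k| < S) (hac : 0 < a ^ 2 + c ^ 2) :
    0 < (a ^ 2 + c ^ 2) / 2 * S - 2 * (a * c) * k := by
  have hle := sq_abs_sub_abs_mul_abs_le (a := a) (c := c) (k := k) le_rfl
  have hS : (a ^ 2 + c ^ 2) / 2 * (2 * |k|) < (a ^ 2 + c ^ 2) / 2 * S := by gcongr
  nlinarith [mul_nonneg (sq_nonneg (|a| - |c|)) (abs_nonneg k)]

end RealInequalities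

section SumIdentities

variable {ι : Type*} [Fintype ι]

lemma sum_sum_eq_sum_offDiag_of_diag_eq_zero {M : Type*} [AddCommMonoid M] (f : ι → ι → M)
    (hf : ∀ α, f α α = 0) : ∑ α, ∑ β, f α β = ∑ p ∈ univ.offDiag, f p.1 p.2 := by
  rw [← Fintype.sum_prod_type', ← univ_product_univ]
  refine (sum_subset (fun p _ => by simp) fun p _ hp => ?_).symm
  simp only [mem_offDiag, mem_univ, true_and, not_not] at hp
  rw [hp, hf]

lemma sum_sum_mul_eq_sum_sum_mean_mul (a : ι → ℝ) (S : ι → ι → ℝ)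
    (hS : ∀ α β, S α β = S β α) :
    ∑ α, ∑ β, a α * S α β = ∑ α, ∑ β, (a α + a β) / 2 * S α β := by
  have hswap : ∑ α, ∑ β, a β * S α β = ∑ α, ∑ β, a α * S α β := by
    rw [sum_comm]; simp only [hS]
  simp only [add_div, add_mul, sum_add_distrib, div_mul_eq_mul_div, ← sum_div, hswap]
  ring

end SumIdentities

section SkewDiagonal

variable {ι : Type*} [DecidableEq ι]

def skewDiagonal (lam : ι → ℝ) : Matrix (ι ⊕ ι) (ι ⊕ ι) ℝ :=
  fromBlocks 0 (diagonal lam) (-diagonal lam) 0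

lemma eq_skewDiagonal (P : ι ⊕ ι → ι ⊕ ι → ℝ) (lam : ι → ℝ) (hP : ∀ i k, P i k = -P k i)
    (hvw : ∀ α β, P (.inl α) (.inr β) = if α = β then lam α else 0)
    (hvv : ∀ α β, P (.inl α) (.inl β) = 0) (hww : ∀ α β, P (.inr α) (.inr β) = 0) :
    P = skewDiagonal lam := by
  ext (α | α) (β | β)
  · simp [skewDiagonal, hvv]
  · simp [skewDiagonal, diagonal_apply, hvw]
  · rw [hP, hvw]
    by_cases h : β = α <;> simp [skewDiagonal, h, Ne.symm]
  · simp [skewDiagonal, hww]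

variable [Fintype ι]

lemma sum_mul_skewDiagonal_mul_skewDiagonal (lam : ι → ℝ) (F : ι ⊕ ι → ι ⊕ ι → ℝ) :
    ∑ i, ∑ j, ∑ k, F i j * skewDiagonal lam i k * skewDiagonal lam j k
      = ∑ α, (F (.inl α) (.inl α) + F (.inr α) (.inr α)) * lam α ^ 2 := by
  simp only [skewDiagonal, diagonal_neg, Fintype.sum_sum_type, fromBlocks_apply₁₁,
    fromBlocks_apply₁₂, fromBlocks_apply₂₁, fromBlocks_apply₂₂, Matrix.zero_apply, diagonal_apply,
    mul_zero, zero_mul, mul_ite, ite_mul, sum_const_zero, sum_ite_eq, mem_univ, ↓reduceIte,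
    zero_add, add_zero, mul_neg, neg_mul, neg_neg, neg_zero, sum_neg_distrib, ← sum_add_distrib]
  refine sum_congr rfl fun α _ => ?_
  ring

lemma sum_mul_skewDiagonal_mul_skewDiagonal₄ (lam : ι → ℝ)
    (G : ι ⊕ ι → ι ⊕ ι → ι ⊕ ι → ι ⊕ ι → ℝ) :
    ∑ i, ∑ j, ∑ k, ∑ l, G i j k l * skewDiagonal lam i k * skewDiagonal lam j l
      = ∑ α, ∑ β, (G (.inl α) (.inl β) (.inr α) (.inr β) - G (.inl α) (.inr β) (.inr α) (.inl β)
          - G (.inr α) (.inl β) (.inl α) (.inr β) + G (.inr α) (.inr β) (.inl α) (.inl β))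
            * (lam α * lam β) := by
  simp only [skewDiagonal, diagonal_neg, Fintype.sum_sum_type, fromBlocks_apply₁₁,
    fromBlocks_apply₁₂, fromBlocks_apply₂₁, fromBlocks_apply₂₂, Matrix.zero_apply, diagonal_apply,
    mul_zero, zero_mul, mul_ite, ite_mul, sum_const_zero, sum_ite_eq, mem_univ, ↓reduceIte,
    zero_add, add_zero, mul_neg, neg_mul, neg_neg, neg_zero, sum_neg_distrib]
  simp only [← sum_neg_distrib, ← sum_add_distrib]
  refine sum_congr rfl fun α _ => sum_congr rfl fun β _ => ?_
  ring

end SkewDiagonal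

section Curvature

variable {E : Type*} [NormedAddCommGroup E] [InnerProductSpace ℝ E]
  (R : E →ₗ[ℝ] E →ₗ[ℝ] E →ₗ[ℝ] E →ₗ[ℝ] ℝ)

lemma curvature_swap (hanti : ∀ x y z w, R x y z w = - R y x z w)
    (hpair : ∀ x y z w, R x y z w = R z w x y) (x y : E) : R y x y x = R x y x y := by
  rw [hanti, hpair, ← hanti, hpair]

lemma curvature_self_left (hanti : ∀ x y z w, R x y z w = - R y x z w) (x z w : E) :
    R x x z w = 0 := by
  linarith [hanti x x z w]

lemma curvature_bianchi_combination (hanti : ∀ x y z w, R x y z w = - R y x z w)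
    (hpair : ∀ x y z w, R x y z w = R z w x y)
    (hbianchi : ∀ x y z w, R x y z w + R y z x w + R z x y w = 0) (x y z u : E) :
    R x z y u - R x u y z - R y z x u + R y u x z = 2 * R x y z u := by
  linarith [hbianchi x y z u, hpair y z x u, hpair y u x z, hanti z x y u]

def isotropicCurvature (e : Fin 4 → E) : ℝ :=
  R (e 0) (e 2) (e 0) (e 2) + R (e 0) (e 3) (e 0) (e 3)
    + R (e 1) (e 2) (e 1) (e 2) + R (e 1) (e 3) (e 1) (e 3) - 2 * R (e 0) (e 1) (e 2) (e 3)

lemma isotropicCurvature_vecCons (x y z u : E) :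
    isotropicCurvature R ![x, y, z, u]
      = R x z x z + R x u x u + R y z y z + R y u y u - 2 * R x y z u := rfl

lemma isotropicCurvature_vecCons_neg (x y z u : E) :
    isotropicCurvature R ![x, y, z, -u]
      = R x z x z + R x u x u + R y z y z + R y u y u + 2 * R x y z u := by
  simp only [isotropicCurvature, Matrix.cons_val, map_neg, LinearMap.neg_apply, neg_neg]
  ring

lemma orthonormal_vecCons_neg {x y z u : E} (h : Orthonormal ℝ ![x, y, z, u]) :
    Orthonormal ℝ ![x, y, z, -u] :=
  h.orthonormal_of_forall_eq_or_eq_neg fun i => by fin_cases i <;> simp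

lemma two_mul_abs_le_of_isotropicCurvature_nonneg
    (hNIC : ∀ e : Fin 4 → E, Orthonormal ℝ e → 0 ≤ isotropicCurvature R e)
    {x y z u : E} (h : Orthonormal ℝ ![x, y, z, u]) :
    2 * |R x y z u| ≤ R x z x z + R x u x u + R y z y z + R y u y u := by
  have h₁ := isotropicCurvature_vecCons R x y z u ▸ hNIC _ h
  have h₂ := isotropicCurvature_vecCons_neg R x y z u ▸ hNIC _ (orthonormal_vecCons_neg h)
  rw [← abs_two, ← abs_mul, abs_le]
  constructor <;> linarith

lemma two_mul_abs_lt_of_isotropicCurvature_pos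
    (hPIC : ∀ e : Fin 4 → E, Orthonormal ℝ e → 0 < isotropicCurvature R e)
    {x y z u : E} (h : Orthonormal ℝ ![x, y, z, u]) :
    2 * |R x y z u| < R x z x z + R x u x u + R y z y z + R y u y u := by
  have h₁ := isotropicCurvature_vecCons R x y z u ▸ hPIC _ h
  have h₂ := isotropicCurvature_vecCons_neg R x y z u ▸ hPIC _ (orthonormal_vecCons_neg h)
  rw [← abs_two, ← abs_mul, abs_lt]
  constructor <;> linarith

def curvatureTerm {κ : Type*} [Fintype κ] (Ric : E → E → ℝ) (b : κ → E) (P : κ → κ → ℝ) : ℝ :=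
  (∑ i, ∑ j, ∑ k, Ric (b i) (b j) * P i k * P j k)
    - (∑ i, ∑ j, ∑ k, ∑ l, R (b i) (b j) (b k) (b l) * P i k * P j l)

end Curvature

section AdaptedBasis

variable {E : Type*} [NormedAddCommGroup E] [InnerProductSpace ℝ E]
  (R : E →ₗ[ℝ] E →ₗ[ℝ] E →ₗ[ℝ] E →ₗ[ℝ] ℝ) {ι : Type*} (b : ι ⊕ ι → E)

def crossCurvature (α β : ι) : ℝ :=
  R (b (.inl α)) (b (.inr α)) (b (.inl β)) (b (.inr β))

def planeCurvatureSum (α β : ι) : ℝ :=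
  R (b (.inl α)) (b (.inl β)) (b (.inl α)) (b (.inl β))
    + R (b (.inl α)) (b (.inr β)) (b (.inl α)) (b (.inr β))
    + R (b (.inr α)) (b (.inl β)) (b (.inr α)) (b (.inl β))
    + R (b (.inr α)) (b (.inr β)) (b (.inr α)) (b (.inr β))

lemma planeCurvatureSum_comm (hanti : ∀ x y z w, R x y z w = - R y x z w)
    (hpair : ∀ x y z w, R x y z w = R z w x y) (α β : ι) :
    planeCurvatureSum R b α β = planeCurvatureSum R b β α := by
  simp only [planeCurvatureSum]
  rw [curvature_swap R hanti hpair (b (.inl α)), curvature_swap R hanti hpair (b (.inr α)),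
    curvature_swap R hanti hpair (b (.inl α)), curvature_swap R hanti hpair (b (.inr α))]
  ring

lemma planeCurvatureSum_self (hanti : ∀ x y z w, R x y z w = - R y x z w)
    (hpair : ∀ x y z w, R x y z w = R z w x y) (α : ι) :
    planeCurvatureSum R b α α = 2 * crossCurvature R b α α := by
  simp only [planeCurvatureSum, crossCurvature]
  rw [curvature_self_left R hanti, curvature_self_left R hanti,
    curvature_swap R hanti hpair (b (.inl α))]
  ring

lemma orthonormal_vecCons_of_ne (hb : Orthonormal ℝ b) {α β : ι} (h : α ≠ β) :
    Orthonormal ℝ ![b (.inl α), b (.inr α), b (.inl β), b (.inr β)] := by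
  have hcomp : ![b (.inl α), b (.inr α), b (.inl β), b (.inr β)]
      = b ∘ ![.inl α, .inr α, .inl β, .inr β] := by
    ext i : 1; fin_cases i <;> rfl
  rw [hcomp]
  exact hb.comp _ fun i j => by fin_cases i <;> fin_cases j <;> simp [h, h.symm]

lemma two_mul_abs_crossCurvature_le (hb : Orthonormal ℝ b)
    (hNIC : ∀ e : Fin 4 → E, Orthonormal ℝ e → 0 ≤ isotropicCurvature R e)
    {α β : ι} (h : α ≠ β) : 2 * |crossCurvature R b α β| ≤ planeCurvatureSum R b α β :=
  two_mul_abs_le_of_isotropicCurvature_nonneg R hNIC (orthonormal_vecCons_of_ne b hb h)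

lemma two_mul_abs_crossCurvature_lt (hb : Orthonormal ℝ b)
    (hPIC : ∀ e : Fin 4 → E, Orthonormal ℝ e → 0 < isotropicCurvature R e)
    {α β : ι} (h : α ≠ β) : 2 * |crossCurvature R b α β| < planeCurvatureSum R b α β :=
  two_mul_abs_lt_of_isotropicCurvature_pos R hPIC (orthonormal_vecCons_of_ne b hb h)

variable [Fintype ι] [DecidableEq ι]

lemma curvatureTerm_skewDiagonal (Ric : E → E → ℝ)
    (hRic : ∀ x y, Ric x y = ∑ i, R x (b i) y (b i))
    (hanti : ∀ x y z w, R x y z w = - R y x z w) (hpair : ∀ x y z w, R x y z w = R z w x y)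
    (hbianchi : ∀ x y z w, R x y z w + R y z x w + R z x y w = 0) (lam : ι → ℝ) :
    curvatureTerm R Ric b (skewDiagonal lam)
      = ∑ α, ∑ β, (lam α ^ 2 * planeCurvatureSum R b α β
          - 2 * (lam α * lam β) * crossCurvature R b α β) := by
  have hRicSum : ∀ α, Ric (b (.inl α)) (b (.inl α)) + Ric (b (.inr α)) (b (.inr α))
      = ∑ β, planeCurvatureSum R b α β := by
    intro α
    simp only [hRic, Fintype.sum_sum_type, planeCurvatureSum, ← sum_add_distrib]
    exact sum_congr rfl fun β _ => by ring
  unfold curvatureTerm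
  rw [sum_mul_skewDiagonal_mul_skewDiagonal,
    sum_mul_skewDiagonal_mul_skewDiagonal₄]
  simp only [hRicSum, curvature_bianchi_combination R hanti hpair hbianchi, sum_mul,
    ← sum_sub_distrib]
  exact sum_congr rfl fun α _ => sum_congr rfl fun β _ => by rw [crossCurvature]; ring

lemma curvatureTerm_skewDiagonal_eq_sum_offDiag (Ric : E → E → ℝ)
    (hRic : ∀ x y, Ric x y = ∑ i, R x (b i) y (b i))
    (hanti : ∀ x y z w, R x y z w = - R y x z w) (hpair : ∀ x y z w, R x y z w = R z w x y)
    (hbianchi : ∀ x y z w, R x y z w + R y z x w + R z x y w = 0) (lam : ι → ℝ) :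
    curvatureTerm R Ric b (skewDiagonal lam)
      = ∑ p ∈ univ.offDiag, ((lam p.1 ^ 2 + lam p.2 ^ 2) / 2 * planeCurvatureSum R b p.1 p.2
          - 2 * (lam p.1 * lam p.2) * crossCurvature R b p.1 p.2) := by
  calc curvatureTerm R Ric b (skewDiagonal lam)
      = ∑ α, ∑ β, (lam α ^ 2 * planeCurvatureSum R b α β
          - 2 * (lam α * lam β) * crossCurvature R b α β) :=
        curvatureTerm_skewDiagonal R b Ric hRic hanti hpair hbianchi lam
    _ = ∑ α, ∑ β, ((lam α ^ 2 + lam β ^ 2) / 2 * planeCurvatureSum R b α β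
          - 2 * (lam α * lam β) * crossCurvature R b α β) := by
        simp only [sum_sub_distrib]
        rw [sum_sum_mul_eq_sum_sum_mean_mul (fun α => lam α ^ 2) _
          (planeCurvatureSum_comm R b hanti hpair)]
    _ = _ := sum_sum_eq_sum_offDiag_of_diag_eq_zero _ fun α => by
        rw [planeCurvatureSum_self R b hanti hpair]; ring

lemma sum_offDiag_le_curvatureTerm (hb : Orthonormal ℝ b) (Ric : E → E → ℝ)
    (hRic : ∀ x y, Ric x y = ∑ i, R x (b i) y (b i))
    (hanti : ∀ x y z w, R x y z w = - R y x z w) (hpair : ∀ x y z w, R x y z w = R z w x y)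
    (hbianchi : ∀ x y z w, R x y z w + R y z x w + R z x y w = 0)
    (hNIC : ∀ e : Fin 4 → E, Orthonormal ℝ e → 0 ≤ isotropicCurvature R e) (lam : ι → ℝ) :
    ∑ p ∈ univ.offDiag, (|lam p.1| - |lam p.2|) ^ 2 * |crossCurvature R b p.1 p.2|
      ≤ curvatureTerm R Ric b (skewDiagonal lam) := by
  rw [curvatureTerm_skewDiagonal_eq_sum_offDiag R b Ric hRic hanti hpair hbianchi]
  exact sum_le_sum fun p hp =>
    sq_abs_sub_abs_mul_abs_le (two_mul_abs_crossCurvature_le R b hb hNIC (mem_offDiag.1 hp).2.2)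

lemma curvatureTerm_pos [Nontrivial ι] (hb : Orthonormal ℝ b) (Ric : E → E → ℝ)
    (hRic : ∀ x y, Ric x y = ∑ i, R x (b i) y (b i))
    (hanti : ∀ x y z w, R x y z w = - R y x z w) (hpair : ∀ x y z w, R x y z w = R z w x y)
    (hbianchi : ∀ x y z w, R x y z w + R y z x w + R z x y w = 0)
    (hPIC : ∀ e : Fin 4 → E, Orthonormal ℝ e → 0 < isotropicCurvature R e) (lam : ι → ℝ)
    (hlam : 0 < ∑ α, lam α ^ 2) :
    0 < curvatureTerm R Ric b (skewDiagonal lam) := by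
  have hNIC e he := (hPIC e he).le
  obtain ⟨α, -, hα⟩ := exists_ne_zero_of_sum_ne_zero hlam.ne'
  obtain ⟨β, hβ⟩ := exists_ne α
  rw [curvatureTerm_skewDiagonal_eq_sum_offDiag R b Ric hRic hanti hpair hbianchi]
  refine sum_pos' (fun p hp => ?_) ⟨(α, β), mem_offDiag.2 ⟨mem_univ _, mem_univ _, hβ.symm⟩, ?_⟩
  · exact (mul_nonneg (sq_nonneg _) (abs_nonneg _)).trans
      (sq_abs_sub_abs_mul_abs_le (two_mul_abs_crossCurvature_le R b hb hNIC (mem_offDiag.1 hp).2.2))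
  · exact sub_pos_of_two_mul_abs_lt (two_mul_abs_crossCurvature_lt R b hb hPIC hβ.symm)
      (by positivity)

end AdaptedBasis

/-- Micallef–Wang curvature term estimate: let ψ be a 2-form on a Euclidean space of
dimension n = 2m diagonalized by an orthonormal basis {v_α, w_α} with ψ(v_α,w_β) =
λ_α δ_{αβ}, and let R be an algebraic curvature tensor with nonnegative isotropic
curvature and Σλ_α² > 0.  Then Σ(Ric^{ij}g^{kl} - R^{ijkl})ψ_{ik}ψ_{jl} ≥
Σ_{α≠β}(|λ_α|-|λ_β|)²|R(v_α,w_α,v_β,w_β)| ≥ 0, with strict positivity under positive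
isotropic curvature.  The basis is indexed by Fin m ⊕ Fin m: v_α = b(inl α),
w_α = b(inr α). -/
theorem stmt_14 (m : ℕ) (hm : 2 ≤ m)
    (b : OrthonormalBasis (Fin m ⊕ Fin m) ℝ (EuclideanSpace ℝ (Fin m ⊕ Fin m)))
    (R : EuclideanSpace ℝ (Fin m ⊕ Fin m) →ₗ[ℝ] EuclideanSpace ℝ (Fin m ⊕ Fin m) →ₗ[ℝ]
      EuclideanSpace ℝ (Fin m ⊕ Fin m) →ₗ[ℝ] EuclideanSpace ℝ (Fin m ⊕ Fin m) →ₗ[ℝ] ℝ)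
    (Ric : EuclideanSpace ℝ (Fin m ⊕ Fin m) → EuclideanSpace ℝ (Fin m ⊕ Fin m) → ℝ)
    (ψ : EuclideanSpace ℝ (Fin m ⊕ Fin m) → EuclideanSpace ℝ (Fin m ⊕ Fin m) → ℝ)
    (lam : Fin m → ℝ)
    (hanti : ∀ x y z w, R x y z w = - R y x z w)
    (hpair : ∀ x y z w, R x y z w = R z w x y)
    (hbianchi : ∀ x y z w, R x y z w + R y z x w + R z x y w = 0)
    (hRic : ∀ x y, Ric x y = ∑ i, R x (b i) y (b i))
    (hNIC : ∀ e : Fin 4 → EuclideanSpace ℝ (Fin m ⊕ Fin m), Orthonormal ℝ e →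
      0 ≤ R (e 0) (e 2) (e 0) (e 2) + R (e 0) (e 3) (e 0) (e 3)
        + R (e 1) (e 2) (e 1) (e 2) + R (e 1) (e 3) (e 1) (e 3)
        - 2 * R (e 0) (e 1) (e 2) (e 3))
    (hψanti : ∀ x y, ψ x y = - ψ y x)
    (hψvw : ∀ α β : Fin m, ψ (b (Sum.inl α)) (b (Sum.inr β)) = if α = β then lam α else 0)
    (hψvv : ∀ α β : Fin m, ψ (b (Sum.inl α)) (b (Sum.inl β)) = 0)
    (hψww : ∀ α β : Fin m, ψ (b (Sum.inr α)) (b (Sum.inr β)) = 0)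
    (hlam : 0 < ∑ α, lam α ^ 2) :
    ((∑ i, ∑ j, ∑ k, Ric (b i) (b j) * ψ (b i) (b k) * ψ (b j) (b k))
        - (∑ i, ∑ j, ∑ k, ∑ l, R (b i) (b j) (b k) (b l) * ψ (b i) (b k) * ψ (b j) (b l))
      ≥ ∑ p ∈ Finset.univ.offDiag, (|lam p.1| - |lam p.2|) ^ 2
          * |R (b (Sum.inl p.1)) (b (Sum.inr p.1)) (b (Sum.inl p.2)) (b (Sum.inr p.2))|) ∧
    (0 ≤ ∑ p ∈ Finset.univ.offDiag, (|lam p.1| - |lam p.2|) ^ 2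
          * |R (b (Sum.inl p.1)) (b (Sum.inr p.1)) (b (Sum.inl p.2)) (b (Sum.inr p.2))|) ∧
    ((∀ e : Fin 4 → EuclideanSpace ℝ (Fin m ⊕ Fin m), Orthonormal ℝ e →
        0 < R (e 0) (e 2) (e 0) (e 2) + R (e 0) (e 3) (e 0) (e 3)
          + R (e 1) (e 2) (e 1) (e 2) + R (e 1) (e 3) (e 1) (e 3)
          - 2 * R (e 0) (e 1) (e 2) (e 3)) →
      0 < (∑ i, ∑ j, ∑ k, Ric (b i) (b j) * ψ (b i) (b k) * ψ (b j) (b k))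
        - (∑ i, ∑ j, ∑ k, ∑ l, R (b i) (b j) (b k) (b l) * ψ (b i) (b k) * ψ (b j) (b l))) := by
  have hψ : (fun i k => ψ (b i) (b k)) = skewDiagonal lam :=
    eq_skewDiagonal _ lam (fun _ _ => hψanti _ _) hψvw hψvv hψww
  have hterm := congrArg (curvatureTerm R Ric b) hψ
  have : Nontrivial (Fin m) := Fin.nontrivial_iff_two_le.2 hm
  exact ⟨(sum_offDiag_le_curvatureTerm R b b.orthonormal Ric hRic hanti hpair hbianchi hNIC lam
      ).trans_eq hterm.symm,
    sum_nonneg fun _ _ => by positivity,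
    fun hPIC => (curvatureTerm_pos R b b.orthonormal Ric hRic hanti hpair hbianchi hPIC lam hlam
      ).trans_eq hterm.symm⟩
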